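/- arXiv:2103.00061 — 2 statements merged into one kernel-verified Lean document; each statement's English description precedes it below -/
import Mathlib

section
/- (Uniform L∞ bound.) Let v be C¹ and non-increasing on [0,∞), and let x₀,…,x_n : [0,∞) → ℝ solve the follow-the-leader system with x₀(0) < x₁(0) < … < x_n(0). Then for all t ≥ 0 and all i ∈ {0,…,n−1}, R_i(t) ≤ max_{j=0,…,n−1} R_j(0). Consequently, if R_j(0) ≤ R̄ for all j, then ‖ρⁿ(·,t)‖_{L∞(ℝ)} ≤ R̄ for all t ≥ 0. -/
/-!
A shortest gap between consecutive vehicles never shrinks: the vehicle behind it sees a density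
`R_i` at least as large as the one the vehicle in front sees (or the leader's `0`), and since `v`
is non-increasing it is no faster. Formally, the upper envelope `max_i (x_i - x_{i+1})` of the
negated gaps cannot increase while it is negative, by fencing it with lines of arbitrarily small
positive slope. Hence every gap stays at least the smallest initial gap, which bounds `R_i(t)` by
`max_j R_j(0)`; in particular the vehicles stay ordered, the intervals `[x_i, x_{i+1})` are
disjoint, and `ρⁿ(·, t)` only takes the values `R_i(t)` and `0`.
-/

open MeasureTheory Set Filter Topology

/-- The discrete forward-difference density `R_i(t) = (1/n)/(x_{i+1}(t) - x_i(t))`. -/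
noncomputable def Rden (n : ℕ) (x : ℕ → ℝ → ℝ) (i : ℕ) (t : ℝ) : ℝ :=
  (1 / n) / (x (i + 1) t - x i t)

/-- The discrete (piecewise constant) density
`ρⁿ(y,t) = Σ_{i<n} R_i(t) · 1_{[x_i(t), x_{i+1}(t))}(y)`. -/
noncomputable def discDens (n : ℕ) (x : ℕ → ℝ → ℝ) (y t : ℝ) : ℝ :=
  ∑ i ∈ Finset.range n,
    Set.indicator (Set.Ico (x i t) (x (i + 1) t)) (fun _ => Rden n x i t) y

section UpperEnvelope

variable {ι : Type*} {s : Finset ι} (hs : s.Nonempty) {g : ι → ℝ → ℝ}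

theorem eventually_slope_sup'_lt {g' : ι → ℝ} {t r : ℝ}
    (hg : ∀ i ∈ s, HasDerivWithinAt (g i) (g' i) (Ioi t) t)
    (hr : ∀ i ∈ s, g i t = s.sup' hs (g · t) → g' i < r) :
    ∀ᶠ z in 𝓝[>] t, slope (fun z => s.sup' hs (g · z)) t z < r := by
  set M := s.sup' hs (g · t)
  have below : ∀ i ∈ s, ∀ᶠ z in 𝓝[>] t, g i z < M + r * (z - t) := by
    intro i hi
    by_cases hact : g i t = M
    · filter_upwards [(hg i hi).limsup_slope_le' (lt_irrefl t) (hr i hi hact),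
        self_mem_nhdsWithin] with z hz hzt
      rw [slope_def_field, div_lt_iff₀ (sub_pos.mpr hzt)] at hz
      linarith
    · have hlt : g i t - (M + r * (t - t)) < 0 := by
        rw [sub_self, mul_zero, add_zero, sub_neg]
        exact lt_of_le_of_ne (s.le_sup' (g · t) hi) hact
      have hcont : ContinuousWithinAt (fun z => g i z - (M + r * (z - t))) (Ioi t) t :=
        (hg i hi).continuousWithinAt.sub (by fun_prop)
      filter_upwards [hcont.tendsto.eventually (gt_mem_nhds hlt)] with z hz
      linarith
  filter_upwards [s.eventually_all.mpr below, self_mem_nhdsWithin] with z hz hzt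
  rw [slope_def_field, div_lt_iff₀ (sub_pos.mpr hzt), sub_lt_iff_lt_add', Finset.sup'_lt_iff]
  exact hz

theorem sup'_le_sup'_of_deriv_nonpos_at_max {g' : ι → ℝ → ℝ} {a c : ℝ}
    (hg : ∀ i ∈ s, ∀ t ∈ Ici a, HasDerivWithinAt (g i) (g' i t) (Ici a) t)
    (hc : s.sup' hs (g · a) < c)
    (hmax : ∀ t ∈ Ici a, s.sup' hs (g · t) < c →
      ∀ i ∈ s, g i t = s.sup' hs (g · t) → g' i t ≤ 0)
    {t : ℝ} (ht : a ≤ t) :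
    s.sup' hs (g · t) ≤ s.sup' hs (g · a) := by
  set f : ℝ → ℝ := fun z => s.sup' hs (g · z)
  have hcont : ContinuousOn f (Icc a t) :=
    ContinuousOn.finset_sup'_apply hs fun i hi z hz =>
      ((hg i hi z hz.1).continuousWithinAt).mono Icc_subset_Ici_self
  have hactive (z : ℝ) : (s.filter fun i => g i z = f z).Nonempty := by
    obtain ⟨i, hi, hieq⟩ := s.exists_mem_eq_sup' hs (g · z)
    exact ⟨i, Finset.mem_filter.mpr ⟨hi, hieq.symm⟩⟩
  set F : ℝ → ℝ := fun z => (s.filter fun i => g i z = f z).sup' (hactive z) (g' · z)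
  have hslope : ∀ z ∈ Ico a t, ∀ r, F z < r → ∃ᶠ w in 𝓝[>] z, slope f z w < r := by
    intro z hz r hr
    refine (eventually_slope_sup'_lt hs (g' := (g' · z)) (fun i hi => ?_)
      fun i hi hact => ?_).frequently
    · exact (hg i hi z hz.1).mono (Ioi_subset_Ici hz.1)
    · exact (Finset.le_sup' (g' · z) (Finset.mem_filter.mpr ⟨hi, hact⟩)).trans_lt hr
  -- fence `f` by lines of arbitrarily small slope `ε`; contact happens below the level `c`
  have fence : ∀ ε > 0, ε * (t - a) < c - f a → f t ≤ f a + ε * (t - a) := by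
    intro ε hε hεc
    refine image_le_of_liminf_slope_right_lt_deriv_boundary' hcont hslope
      (B := fun z => f a + ε * (z - a)) (B' := fun _ => ε) (by simp)
      (by fun_prop) (fun z _ => ?_) (fun z hz hcontact => ?_) (right_mem_Icc.mpr ht)
    · simpa using ((hasDerivWithinAt_id z (Ici z)).sub_const a).const_mul ε |>.const_add (f a)
    · have hbelow : f z < c := by
        have : ε * (z - a) ≤ ε * (t - a) := by gcongr; exact hz.2.le
        linarith
      refine lt_of_le_of_lt ((Finset.sup'_le_iff _ _).mpr fun i hi => ?_) hε
      obtain ⟨hi, hact⟩ := Finset.mem_filter.mp hi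
      exact hmax z hz.1 hbelow i hi hact
  have hlim : Tendsto (fun ε : ℝ => ε * (t - a)) (𝓝[>] 0) (𝓝 0) := by
    simpa using (tendsto_id.mul_const (t - a)).mono_left (nhdsWithin_le_nhds (a := (0 : ℝ)))
  refine ge_of_tendsto (by simpa using tendsto_const_nhds.add hlim) ?_
  filter_upwards [self_mem_nhdsWithin, hlim.eventually (gt_mem_nhds (sub_pos.mpr hc))]
    with ε hε hεc using fence ε hε hεc

end UpperEnvelope

theorem MonotoneOn.pairwiseDisjoint_Ico_succ {β : Type*} [Preorder β] {p : ℕ → β} {n : ℕ}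
    (hp : MonotoneOn p (Iic n)) :
    (Finset.range n : Set ℕ).PairwiseDisjoint fun i => Ico (p i) (p (i + 1)) := by
  have hdisj : ∀ i j, i < j → j < n →
      Disjoint (Ico (p i) (p (i + 1))) (Ico (p j) (p (j + 1))) :=
    fun i j hij hjn => disjoint_iff_inf_le.mpr fun _ ⟨⟨_, h₁⟩, ⟨h₂, _⟩⟩ =>
      h₁.not_ge <| (hp (mem_Iic.mpr (by omega)) (mem_Iic.mpr hjn.le) hij).trans h₂
  intro i hi j hj hij
  simp only [Finset.coe_range, mem_Iio] at hi hj
  rcases hij.lt_or_gt with h | h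
  · exact hdisj i j h hj
  · exact (hdisj j i h hi).symm

theorem Finset.sum_indicator_le_of_pairwiseDisjoint {ι α M : Type*}
    [AddCommMonoid M] [Preorder M] {s : Finset ι} {S : ι → Set α}
    (hS : (s : Set ι).PairwiseDisjoint S) {c : ι → M} {B : M}
    (hc : ∀ i ∈ s, c i ≤ B) (hB : 0 ≤ B) (y : α) :
    ∑ i ∈ s, (S i).indicator (fun _ => c i) y ≤ B := by
  by_cases hy : ∃ i ∈ s, y ∈ S i
  · obtain ⟨i, hi, hyi⟩ := hy
    rw [Finset.sum_eq_single_of_mem i hi fun j hj hji =>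
      indicator_of_notMem (fun hyj => (hS hj hi hji).ne_of_mem hyj hyi rfl) _]
    rw [indicator_of_mem hyi]
    exact hc i hi
  · push Not at hy
    rw [Finset.sum_eq_zero fun i hi => indicator_of_notMem (hy i hi) _]
    exact hB

section FollowTheLeader

variable {v : ℝ → ℝ} {n : ℕ} {x : ℕ → ℝ → ℝ}

noncomputable def ftlVelocity (v : ℝ → ℝ) (n : ℕ) (x : ℕ → ℝ → ℝ) (i : ℕ) (t : ℝ) : ℝ :=
  if i < n then v (Rden n x i t) else v 0

theorem hasDerivWithinAt_position
    (hode : ∀ i < n, ∀ t ∈ Ici (0:ℝ),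
      HasDerivWithinAt (x i) (v (Rden n x i t)) (Ici 0) t)
    (hoden : ∀ t ∈ Ici (0:ℝ), HasDerivWithinAt (x n) (v 0) (Ici 0) t)
    {i : ℕ} (hi : i ≤ n) {t : ℝ} (ht : t ∈ Ici 0) :
    HasDerivWithinAt (x i) (ftlVelocity v n x i t) (Ici 0) t := by
  rcases hi.lt_or_eq with hi | rfl
  · simpa [ftlVelocity, hi] using hode i hi t ht
  · simpa [ftlVelocity] using hoden t ht

theorem Rden_le_Rden_of_gap_le {i j : ℕ} {s t : ℝ} (hpos : 0 < x (i + 1) s - x i s)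
    (hle : x (i + 1) s - x i s ≤ x (j + 1) t - x j t) : Rden n x j t ≤ Rden n x i s :=
  div_le_div_of_nonneg_left (by positivity) hpos hle

theorem Rden_nonneg_of_gap_pos {i : ℕ} {t : ℝ} (hpos : 0 < x (i + 1) t - x i t) :
    0 ≤ Rden n x i t :=
  div_nonneg (by positivity) hpos.le

theorem ftlVelocity_le_succ_of_gap_min (hmono : AntitoneOn v (Ici 0)) {i : ℕ} (hi : i < n)
    {t : ℝ} (hpos : 0 < x (i + 1) t - x i t)
    (hmin : ∀ j < n, x (i + 1) t - x i t ≤ x (j + 1) t - x j t) :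
    ftlVelocity v n x i t ≤ ftlVelocity v n x (i + 1) t := by
  have hRi : 0 ≤ Rden n x i t := Rden_nonneg_of_gap_pos hpos
  rw [ftlVelocity, if_pos hi, ftlVelocity]
  split_ifs with hsucc
  · have hgap := hmin _ hsucc
    exact hmono (Rden_nonneg_of_gap_pos (hpos.trans_le hgap)) hRi
      (Rden_le_Rden_of_gap_le hpos hgap)
  · exact hmono (le_refl (0:ℝ)) hRi hRi

theorem exists_initial_gap_le_gap (hmono : AntitoneOn v (Ici 0)) (hn : 0 < n)
    (hode : ∀ i < n, ∀ t ∈ Ici (0:ℝ),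
      HasDerivWithinAt (x i) (v (Rden n x i t)) (Ici 0) t)
    (hoden : ∀ t ∈ Ici (0:ℝ), HasDerivWithinAt (x n) (v 0) (Ici 0) t)
    (hinit : ∀ i < n, x i 0 < x (i + 1) 0) :
    ∃ j < n, ∀ t ∈ Ici (0:ℝ), ∀ i < n,
      x (j + 1) 0 - x j 0 ≤ x (i + 1) t - x i t := by
  have hne : (Finset.range n).Nonempty := Finset.nonempty_range_iff.mpr hn.ne'
  have henv : ∀ t ∈ Ici (0:ℝ),
      (Finset.range n).sup' hne (fun i => x i t - x (i + 1) t) ≤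
        (Finset.range n).sup' hne (fun i => x i 0 - x (i + 1) 0) := by
    intro t ht
    refine sup'_le_sup'_of_deriv_nonpos_at_max hne (c := 0)
      (g := fun i t => x i t - x (i + 1) t)
      (g' := fun i t => ftlVelocity v n x i t - ftlVelocity v n x (i + 1) t)
      (fun i hi t ht => ?_) ?_ (fun t ht hneg i hi hmax => ?_) ht
    · have hi := Finset.mem_range.mp hi
      exact (hasDerivWithinAt_position hode hoden hi.le ht).sub
        (hasDerivWithinAt_position hode hoden hi ht)
    · exact (Finset.sup'_lt_iff _).mpr fun i hi =>
        sub_neg.mpr (hinit i (Finset.mem_range.mp hi))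
    · have hpos : 0 < x (i + 1) t - x i t := by linarith
      have hmin : ∀ j < n, x (i + 1) t - x i t ≤ x (j + 1) t - x j t := fun j hj => by
        linarith [Finset.le_sup' (fun i => x i t - x (i + 1) t) (Finset.mem_range.mpr hj)]
      exact sub_nonpos.mpr
        (ftlVelocity_le_succ_of_gap_min hmono (Finset.mem_range.mp hi) hpos hmin)
  obtain ⟨j, hj, hjmax⟩ :=
    Finset.exists_mem_eq_sup' hne (fun i => x i 0 - x (i + 1) 0)
  refine ⟨j, Finset.mem_range.mp hj, fun t ht i hi => ?_⟩
  have := (Finset.le_sup' (fun i => x i t - x (i + 1) t) (Finset.mem_range.mpr hi)).trans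
    (henv t ht)
  simp only [hjmax] at this
  linarith

end FollowTheLeader

theorem uniform_Linfty_bound_general
    (v : ℝ → ℝ)
    (hmono : AntitoneOn v (Set.Ici 0))
    (n : ℕ) (hn : 0 < n) (x : ℕ → ℝ → ℝ)
    (hode : ∀ i < n, ∀ t ∈ Set.Ici (0:ℝ),
      HasDerivWithinAt (x i) (v (Rden n x i t)) (Set.Ici 0) t)
    (hoden : ∀ t ∈ Set.Ici (0:ℝ), HasDerivWithinAt (x n) (v 0) (Set.Ici 0) t)
    (hinit : ∀ i < n, x i 0 < x (i + 1) 0) :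
    (∀ t ∈ Set.Ici (0:ℝ), ∀ i < n,
      Rden n x i t ≤ (Finset.range n).sup' (Finset.nonempty_range_iff.mpr hn.ne')
        (fun j => Rden n x j 0)) ∧
    (∀ Rb : ℝ, (∀ j < n, Rden n x j 0 ≤ Rb) →
      ∀ t ∈ Set.Ici (0:ℝ), ∀ y : ℝ, discDens n x y t ≤ Rb) := by
  obtain ⟨j, hj, hgap⟩ := exists_initial_gap_le_gap hmono hn hode hoden hinit
  have hpos₀ : 0 < x (j + 1) 0 - x j 0 := sub_pos.mpr (hinit j hj)
  have hbound : ∀ t ∈ Ici (0:ℝ), ∀ i < n, Rden n x i t ≤ Rden n x j 0 := fun t ht i hi =>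
    Rden_le_Rden_of_gap_le hpos₀ (hgap t ht i hi)
  refine ⟨fun t ht i hi => (hbound t ht i hi).trans
    (Finset.le_sup' (fun j => Rden n x j 0) (Finset.mem_range.mpr hj)), ?_⟩
  intro Rb hRb t ht y
  have hordered : MonotoneOn (x · t) (Iic n) :=
    (strictMonoOn_Iic_of_lt_succ fun i hi => by
      simpa using sub_pos.mp (hpos₀.trans_le (hgap t ht i hi))).monotoneOn
  exact Finset.sum_indicator_le_of_pairwiseDisjoint hordered.pairwiseDisjoint_Ico_succ
    (fun i hi => (hbound t ht i (Finset.mem_range.mp hi)).trans (hRb j hj))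
    ((Rden_nonneg_of_gap_pos hpos₀).trans (hRb j hj)) y

/-- **Uniform L∞ bound** for the follow-the-leader scheme.  If `v` is `C¹` and
non-increasing on `[0,∞)` and the initial positions are strictly ordered, then each
`R_i(t)` is bounded by the largest initial value `max_j R_j(0)`; consequently, if
`R_j(0) ≤ R̄` for all `j`, then `‖ρⁿ(·,t)‖_{L∞} ≤ R̄` for all `t ≥ 0`. -/
theorem uniform_Linfty_bound
    (v : ℝ → ℝ)
    (hv : ContDiffOn ℝ 1 v (Set.Ici 0))
    (hmono : AntitoneOn v (Set.Ici 0))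
    (n : ℕ) (hn : 0 < n) (x : ℕ → ℝ → ℝ)
    (hode : ∀ i < n, ∀ t ∈ Set.Ici (0:ℝ),
      HasDerivWithinAt (x i) (v (Rden n x i t)) (Set.Ici 0) t)
    (hoden : ∀ t ∈ Set.Ici (0:ℝ), HasDerivWithinAt (x n) (v 0) (Set.Ici 0) t)
    (hinit : ∀ i < n, x i 0 < x (i + 1) 0) :
    (∀ t ∈ Set.Ici (0:ℝ), ∀ i < n,
      Rden n x i t ≤ (Finset.range n).sup' (Finset.nonempty_range_iff.mpr hn.ne')
        (fun j => Rden n x j 0)) ∧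
    (∀ Rb : ℝ, (∀ j < n, Rden n x j 0 ≤ Rb) →
      ∀ t ∈ Set.Ici (0:ℝ), ∀ y : ℝ, discDens n x y t ≤ Rb) :=
  uniform_Linfty_bound_general v hmono n hn x hode hoden hinit
end

section
/- (One-sided Lipschitz estimate, general case.) Assume v satisfies (V1) and (V2) on [0,R̄], and let x₀,…,x_n solve the follow-the-leader system with strictly ordered initial positions and with R_i(t) ∈ [0,R̄] for all i and t. Then for all t ≥ 0, all n ∈ ℕ, and all i ∈ {0,…,n−1}, t·(v(R_{i+1}(t)) − v(R_i(t)))/(x_{i+1}(t) − x_i(t)) ≤ 1, with the convention R_n(t) := 0. -/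
open Set

/-!
Write `y_i = x_{i+1} - x_i` and `w_i = v(R_{i+1}) - v(R_i)`, so that the quantity to bound is
`t w_i / y_i` and `ẏ_i = w_i`. Since `Ṙ_j = -R_j w_j / y_j`, the chain rule gives
`ẇ_i = φ(R_i) w_i / y_i - φ(R_{i+1}) w_{i+1} / y_{i+1}` with `φ(ρ) = ρ v'(ρ)`.

The bound is proved by backward induction from the leader, for which `w_n = 0`. Assume it for
`i + 1` and fix `ε > 0`. Wherever `t w_i` touches `(1 + ε) y_i` we have `w_i > 0` and
`w_i / y_i > w_{i+1} / y_{i+1}`. By (V2), `φ` is nondecreasing along `v`, so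
`φ(R_i) ≤ φ(R_{i+1}) ≤ φ(0) = 0`, hence `ẇ_i ≤ 0` and `d/dt (t w_i) < (1 + ε) ẏ_i` there.
By the comparison principle `t w_i ≤ (1 + ε) y_i` for all `t ≥ 0`; now let `ε → 0`.
-/

lemma le_of_apply_le_of_div_sub_nonneg {S : Set ℝ} {v φ : ℝ → ℝ} (hv : InjOn v S)
    (hφ : ∀ r ∈ S, ∀ s ∈ S, r ≠ s → 0 ≤ (φ r - φ s) / (v r - v s))
    ⦃r s : ℝ⦄ (hr : r ∈ S) (hs : s ∈ S) (hrs : v r ≤ v s) : φ r ≤ φ s := by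
  rcases eq_or_ne r s with rfl | hne
  · exact le_rfl
  have hlt : v r - v s < 0 := sub_neg.2 (hrs.lt_of_ne (hv.ne hr hs hne))
  rcases div_nonneg_iff.1 (hφ r hr s hs hne) with h | h
  · linarith [h.2]
  · linarith [h.1]

structure IsFollowTheLeader (v : ℝ → ℝ) (n : ℕ) (x R : ℕ → ℝ → ℝ) : Prop where
  density_eq : ∀ i t, R i t = if i < n then (1 / n) / (x (i + 1) t - x i t) else 0
  lt_succ : ∀ t ∈ Ici (0:ℝ), ∀ i < n, x i t < x (i + 1) t
  hasDerivWithinAt_follower :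
    ∀ i < n, ∀ t ∈ Ici (0:ℝ), HasDerivWithinAt (x i) (v (R i t)) (Ici 0) t
  hasDerivWithinAt_leader : ∀ t ∈ Ici (0:ℝ), HasDerivWithinAt (x n) (v 0) (Ici 0) t

noncomputable def velocitySlope (v : ℝ → ℝ) (x R : ℕ → ℝ → ℝ) (i : ℕ) (t : ℝ) : ℝ :=
  (v (R (i + 1) t) - v (R i t)) / (x (i + 1) t - x i t)

namespace IsFollowTheLeader

variable {v vd : ℝ → ℝ} {n i : ℕ} {x R : ℕ → ℝ → ℝ} {t Rb : ℝ}

lemma density_of_le (h : IsFollowTheLeader v n x R) (hi : n ≤ i) (t : ℝ) : R i t = 0 := by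
  rw [h.density_eq, if_neg hi.not_gt]

lemma gap_pos (h : IsFollowTheLeader v n x R) (hi : i < n) (ht : 0 ≤ t) :
    0 < x (i + 1) t - x i t :=
  sub_pos.2 (h.lt_succ t ht i hi)

lemma hasDerivWithinAt (h : IsFollowTheLeader v n x R) (hi : i ≤ n) (ht : 0 ≤ t) :
    HasDerivWithinAt (x i) (v (R i t)) (Ici 0) t := by
  rcases hi.lt_or_eq with hi | rfl
  · exact h.hasDerivWithinAt_follower i hi t ht
  · rw [h.density_of_le le_rfl]
    exact h.hasDerivWithinAt_leader t ht

lemma velocitySlope_self (h : IsFollowTheLeader v n x R) (t : ℝ) :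
    velocitySlope v x R n t = 0 := by
  simp [velocitySlope, h.density_of_le le_rfl, h.density_of_le n.le_succ]

lemma hasDerivWithinAt_density (h : IsFollowTheLeader v n x R) (hi : i ≤ n) (ht : 0 ≤ t) :
    HasDerivWithinAt (R i) (-(R i t * velocitySlope v x R i t)) (Ici 0) t := by
  rcases hi.lt_or_eq with hi | rfl
  · have hgap := (h.hasDerivWithinAt (i := i + 1) hi ht).sub (h.hasDerivWithinAt hi.le ht)
    have hR : R i = fun s => (1 / n) * (x (i + 1) s - x i s)⁻¹ :=
      funext fun s => by rw [h.density_eq, if_pos hi, div_eq_mul_inv]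
    have hgap_ne := (h.gap_pos hi ht).ne'
    rw [hR]
    refine ((hgap.inv hgap_ne).const_mul (1 / (n : ℝ))).congr_deriv ?_
    simp only [Pi.sub_apply]
    rw [velocitySlope]
    field_simp
  · have hR : R i = fun _ => 0 := funext (h.density_of_le le_rfl)
    rw [hR, zero_mul, neg_zero]
    exact hasDerivWithinAt_const t _ 0

lemma hasDerivWithinAt_velocity (h : IsFollowTheLeader v n x R)
    (hv : ∀ r ∈ Icc 0 Rb, HasDerivWithinAt v (vd r) (Icc 0 Rb) r)
    (hR : ∀ i, ∀ t ∈ Ici (0:ℝ), R i t ∈ Icc 0 Rb) (hi : i ≤ n) (ht : 0 ≤ t) :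
    HasDerivWithinAt (fun s => v (R i s))
      (-(R i t * vd (R i t) * velocitySlope v x R i t)) (Ici 0) t :=
  ((hv _ (hR i t ht)).comp t (h.hasDerivWithinAt_density hi ht)
    (fun s hs => hR i s hs)).congr_deriv (by ring)

lemma hasDerivWithinAt_velocity_sub (h : IsFollowTheLeader v n x R)
    (hv : ∀ r ∈ Icc 0 Rb, HasDerivWithinAt v (vd r) (Icc 0 Rb) r)
    (hR : ∀ i, ∀ t ∈ Ici (0:ℝ), R i t ∈ Icc 0 Rb) (hi : i < n) (ht : 0 ≤ t) :
    HasDerivWithinAt (fun s => v (R (i + 1) s) - v (R i s))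
      (R i t * vd (R i t) * velocitySlope v x R i t
        - R (i + 1) t * vd (R (i + 1) t) * velocitySlope v x R (i + 1) t) (Ici 0) t :=
  ((h.hasDerivWithinAt_velocity (i := i + 1) hv hR hi ht).sub
    (h.hasDerivWithinAt_velocity hv hR hi.le ht)).congr_deriv (by ring)

lemma deriv_velocity_sub_nonpos (h : IsFollowTheLeader v n x R)
    (hanti : StrictAntiOn v (Icc 0 Rb))
    (hφ : ∀ r ∈ Icc 0 Rb, ∀ s ∈ Icc 0 Rb, r ≠ s →
      0 ≤ (r * vd r - s * vd s) / (v r - v s))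
    (hR : ∀ i, ∀ t ∈ Ici (0:ℝ), R i t ∈ Icc 0 Rb) (hi : i < n) (ht : 0 ≤ t)
    (hpos : 0 < velocitySlope v x R i t)
    (hle : velocitySlope v x R (i + 1) t ≤ velocitySlope v x R i t) :
    R i t * vd (R i t) * velocitySlope v x R i t
      - R (i + 1) t * vd (R (i + 1) t) * velocitySlope v x R (i + 1) t ≤ 0 := by
  have hmono := le_of_apply_le_of_div_sub_nonneg (φ := fun r => r * vd r) hanti.injOn hφ
  have h0 : (0:ℝ) ∈ Icc 0 Rb := h.density_of_le le_rfl t ▸ hR n t ht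
  have hRi := hR i t ht
  have hRi' := hR (i + 1) t ht
  have hφ_succ : R (i + 1) t * vd (R (i + 1) t) ≤ 0 := by
    simpa using hmono hRi' h0 (hanti.antitoneOn h0 hRi' hRi'.1)
  have hφ_le : R i t * vd (R i t) ≤ R (i + 1) t * vd (R (i + 1) t) := by
    refine hmono hRi hRi' (sub_nonneg.1 ?_)
    exact ((div_pos_iff_of_pos_right (h.gap_pos hi ht)).1 hpos).le
  nlinarith

lemma mul_velocitySlope_le_one_of_succ (h : IsFollowTheLeader v n x R)
    (hv : ∀ r ∈ Icc 0 Rb, HasDerivWithinAt v (vd r) (Icc 0 Rb) r)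
    (hanti : StrictAntiOn v (Icc 0 Rb))
    (hφ : ∀ r ∈ Icc 0 Rb, ∀ s ∈ Icc 0 Rb, r ≠ s →
      0 ≤ (r * vd r - s * vd s) / (v r - v s))
    (hR : ∀ i, ∀ t ∈ Ici (0:ℝ), R i t ∈ Icc 0 Rb) (hi : i < n)
    (hsucc : ∀ t, 0 ≤ t → t * velocitySlope v x R (i + 1) t ≤ 1) (ht : 0 ≤ t) :
    t * velocitySlope v x R i t ≤ 1 := by
  refine le_of_forall_pos_le_add fun ε hε => ?_
  rw [velocitySlope, ← mul_div_assoc, div_le_iff₀ (h.gap_pos hi ht)]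
  have hw := fun s (hs : 0 ≤ s) => h.hasDerivWithinAt_velocity_sub hv hR hi hs
  have hy := fun s (hs : 0 ≤ s) =>
    (h.hasDerivWithinAt (i := i + 1) hi hs).sub (h.hasDerivWithinAt hi.le hs)
  have hf := fun s (hs : 0 ≤ s) => (hasDerivWithinAt_id s (Ici 0)).mul (hw s hs)
  have hB := fun s (hs : 0 ≤ s) => (hy s hs).const_mul (1 + ε)
  refine image_le_of_deriv_right_lt_deriv_boundary'
    (fun s hs => (hf s hs.1).continuousWithinAt.mono Icc_subset_Ici_self)
    (fun s hs => (hf s hs.1).mono (Ici_subset_Ici.2 hs.1)) ?_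
    (fun s hs => (hB s hs.1).continuousWithinAt.mono Icc_subset_Ici_self)
    (fun s hs => (hB s hs.1).mono (Ici_subset_Ici.2 hs.1)) ?_ ⟨ht, le_rfl⟩
  · simpa using mul_nonneg (by linarith) (h.gap_pos hi le_rfl).le
  intro s hs heq
  simp only [Pi.mul_apply, id, Pi.sub_apply] at heq ⊢
  have hgap := h.gap_pos hi hs.1
  have hs0 : 0 < s := by
    refine lt_of_le_of_ne hs.1 ?_
    rintro rfl
    nlinarith
  have hslope : s * velocitySlope v x R i s = 1 + ε := by
    rw [velocitySlope, ← mul_div_assoc, heq, mul_div_cancel_right₀ _ hgap.ne']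
  have hZ_pos : 0 < velocitySlope v x R i s := pos_of_mul_pos_right (by linarith) hs.1
  have hZ_le : velocitySlope v x R (i + 1) s ≤ velocitySlope v x R i s :=
    le_of_mul_le_mul_left (by linarith [hsucc s hs.1]) hs0
  have hD := h.deriv_velocity_sub_nonpos hanti hφ hR hi hs.1 hZ_pos hZ_le
  have hw_pos : 0 < v (R (i + 1) s) - v (R i s) :=
    pos_of_mul_pos_right (by rw [heq]; positivity) hs.1
  nlinarith [mul_pos hε hw_pos, mul_nonpos_of_nonneg_of_nonpos hs.1 hD]

lemma mul_velocitySlope_le_one (h : IsFollowTheLeader v n x R)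
    (hv : ∀ r ∈ Icc 0 Rb, HasDerivWithinAt v (vd r) (Icc 0 Rb) r)
    (hanti : StrictAntiOn v (Icc 0 Rb))
    (hφ : ∀ r ∈ Icc 0 Rb, ∀ s ∈ Icc 0 Rb, r ≠ s →
      0 ≤ (r * vd r - s * vd s) / (v r - v s))
    (hR : ∀ i, ∀ t ∈ Ici (0:ℝ), R i t ∈ Icc 0 Rb) (hi : i ≤ n) (ht : 0 ≤ t) :
    t * velocitySlope v x R i t ≤ 1 := by
  induction hi using Nat.decreasingInduction generalizing t with
  | self => simp [h.velocitySlope_self]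
  | of_succ k hk ih =>
    exact h.mul_velocitySlope_le_one_of_succ hv hanti hφ hR hk (fun s hs => ih hs) ht

end IsFollowTheLeader

theorem one_sided_lipschitz_general_general
    (Rb : ℝ) (v vd : ℝ → ℝ)
    -- (V1): v ∈ C¹([0,R̄]) with derivative vd, strictly decreasing
    (hv1 : ∀ r ∈ Set.Icc (0:ℝ) Rb, HasDerivWithinAt v (vd r) (Set.Icc 0 Rb) r)
    (hanti : StrictAntiOn v (Set.Icc 0 Rb))
    -- (V2): 0 ≤ (φ(ρ)-φ(σ))/(v(ρ)-v(σ)) ≤ K with φ(r) = r v'(r)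
    (hv2 : ∃ K : ℝ, 0 ≤ K ∧ ∀ r ∈ Set.Icc (0:ℝ) Rb, ∀ s ∈ Set.Icc (0:ℝ) Rb, r ≠ s →
      0 ≤ (r * vd r - s * vd s) / (v r - v s) ∧
      (r * vd r - s * vd s) / (v r - v s) ≤ K)
    (n : ℕ) (x : ℕ → ℝ → ℝ)
    (R : ℕ → ℝ → ℝ)
    -- R_i(t) = (1/n)/(x_{i+1}(t) - x_i(t)) for i < n, and R_n(t) = 0
    (hRdef : ∀ i t, R i t = if i < n then (1 / n) / (x (i + 1) t - x i t) else 0)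
    -- strictly ordered particles
    (horder : ∀ t ∈ Set.Ici (0:ℝ), ∀ i < n, x i t < x (i + 1) t)
    -- densities remain in [0, R̄]
    (hrange : ∀ i, ∀ t ∈ Set.Ici (0:ℝ), R i t ∈ Set.Icc 0 Rb)
    -- follow-the-leader system
    (hode : ∀ i < n, ∀ t ∈ Set.Ici (0:ℝ),
      HasDerivWithinAt (x i) (v (R i t)) (Set.Ici 0) t)
    (hoden : ∀ t ∈ Set.Ici (0:ℝ), HasDerivWithinAt (x n) (v 0) (Set.Ici 0) t) :
    ∀ t ∈ Set.Ici (0:ℝ), ∀ i < n,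
      t * (v (R (i + 1) t) - v (R i t)) / (x (i + 1) t - x i t) ≤ 1 := by
  intro t ht i hi
  obtain ⟨K, -, hv2⟩ := hv2
  have hftl : IsFollowTheLeader v n x R := ⟨hRdef, horder, hode, hoden⟩
  rw [mul_div_assoc]
  exact hftl.mul_velocitySlope_le_one hv1 hanti (fun r hr s hs hrs => (hv2 r hr s hs hrs).1)
    hrange hi.le ht

/-- **One-sided Lipschitz estimate, general case** (Proposition 4.2 of the paper).
Under assumptions (V1) and (V2), the follow-the-leader approximation satisfies
`t (v(R_{i+1}(t)) - v(R_i(t))) / (x_{i+1}(t) - x_i(t)) ≤ 1` for all `t ≥ 0` and all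
`i ∈ {0,…,n-1}`, with the convention `R_n(t) = 0`. -/
theorem one_sided_lipschitz_general
    (Rb : ℝ) (hRbpos : 0 < Rb) (v vd : ℝ → ℝ)
    -- (V1): v ∈ C¹([0,R̄]) with derivative vd, strictly decreasing
    (hv1 : ∀ r ∈ Set.Icc (0:ℝ) Rb, HasDerivWithinAt v (vd r) (Set.Icc 0 Rb) r)
    (hv1c : ContinuousOn vd (Set.Icc 0 Rb))
    (hanti : StrictAntiOn v (Set.Icc 0 Rb))
    -- (V2): 0 ≤ (φ(ρ)-φ(σ))/(v(ρ)-v(σ)) ≤ K with φ(r) = r v'(r)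
    (hv2 : ∃ K : ℝ, 0 ≤ K ∧ ∀ r ∈ Set.Icc (0:ℝ) Rb, ∀ s ∈ Set.Icc (0:ℝ) Rb, r ≠ s →
      0 ≤ (r * vd r - s * vd s) / (v r - v s) ∧
      (r * vd r - s * vd s) / (v r - v s) ≤ K)
    (n : ℕ) (hn : 0 < n) (x : ℕ → ℝ → ℝ)
    (R : ℕ → ℝ → ℝ)
    -- R_i(t) = (1/n)/(x_{i+1}(t) - x_i(t)) for i < n, and R_n(t) = 0
    (hRdef : ∀ i t, R i t = if i < n then (1 / n) / (x (i + 1) t - x i t) else 0)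
    -- strictly ordered particles
    (horder : ∀ t ∈ Set.Ici (0:ℝ), ∀ i < n, x i t < x (i + 1) t)
    -- densities remain in [0, R̄]
    (hrange : ∀ i, ∀ t ∈ Set.Ici (0:ℝ), R i t ∈ Set.Icc 0 Rb)
    -- follow-the-leader system
    (hode : ∀ i < n, ∀ t ∈ Set.Ici (0:ℝ),
      HasDerivWithinAt (x i) (v (R i t)) (Set.Ici 0) t)
    (hoden : ∀ t ∈ Set.Ici (0:ℝ), HasDerivWithinAt (x n) (v 0) (Set.Ici 0) t) :
    ∀ t ∈ Set.Ici (0:ℝ), ∀ i < n,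
      t * (v (R (i + 1) t) - v (R i t)) / (x (i + 1) t - x i t) ≤ 1 :=
  one_sided_lipschitz_general_general Rb v vd hv1 hanti hv2 n x R hRdef horder hrange hode hoden
end
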